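/- The median of n real numbers, n ≥ 2, changing a single input by an arbitrary amount shifts the median by at most the gap to an adjacent order statistic; formally, if n = 2k+1 and we replace one input a_i by any a_i' ∈ ℝ, the new median lies between the k-th and (k+2)-th order statistics of the original multiset. -/

import Mathlib

/-!
Let `s` and `s'` be the sorted lists of `a` and `a'`, and `u` the sorted list of the `2k` entries
off `i0`, which `a` and `a'` share. Then `u` is a sublist of both `s` and `s'`, and deleting one
entry from a sorted list moves every order statistic by at most one place:
`l[i] ≤ u[i] ≤ l[i + 1]`. Chaining, `s[k-1] ≤ u[k-1] ≤ s'[k] ≤ u[k] ≤ s[k+1]`.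
-/

noncomputable def median {n : ℕ} (a : Fin (2 * n + 1) → ℝ) : ℝ :=
  ((List.ofFn a).insertionSort (· ≤ ·)).getD n 0

namespace List

variable {α : Type*}

theorem SortedLE.of_cons [Preorder α] {a : α} {l : List α} (h : (a :: l).SortedLE) :
    l.SortedLE :=
  (sortedLE_iff_pairwise.mp h).of_cons.sortedLE

theorem getElem_le_getElem_of_sublist [Preorder α] {l₁ l₂ : List α} (h : l₁ <+ l₂)
    (hl₂ : l₂.SortedLE) {i : ℕ} (hi : i < l₁.length) :
    l₂[i]'(hi.trans_le h.length_le) ≤ l₁[i] := by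
  induction h generalizing i with
  | slnil => simp at hi
  | @cons l₁ l₂ a h ih =>
    have hi₂ : i < l₂.length := hi.trans_le h.length_le
    have : i + 1 < (a :: l₂).length := by simp only [length_cons]; omega
    calc (a :: l₂)[i] ≤ (a :: l₂)[i + 1] := hl₂.getElem_le_getElem_of_le (by omega)
      _ ≤ l₁[i] := ih hl₂.of_cons hi
  | @cons_cons l₁ l₂ a h ih =>
    cases i with
    | zero => exact le_rfl
    | succ i => exact ih hl₂.of_cons (by simpa using hi)

theorem getElem_le_getElem_add_of_sublist [Preorder α] {l₁ l₂ : List α} (h : l₁ <+ l₂)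
    (hl₂ : l₂.SortedLE) {d : ℕ} (hd : l₂.length = l₁.length + d) {i : ℕ}
    (hi : i < l₁.length) :
    l₁[i] ≤ l₂[i + d] := by
  induction h generalizing i d with
  | slnil => simp at hi
  | @cons l₁ l₂ a h ih =>
    have := h.length_le
    simp only [length_cons] at hd
    obtain ⟨d, rfl⟩ : ∃ d', d = d' + 1 := ⟨d - 1, by omega⟩
    exact ih hl₂.of_cons (by omega) hi
  | @cons_cons l₁ l₂ a h ih =>
    cases i with
    | zero =>
      simp only [Nat.zero_add]
      exact hl₂.getElem_le_getElem_of_le (hi := by simp) (Nat.zero_le d)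
    | succ i =>
      simp only [length_cons] at hd hi
      simpa only [Nat.add_right_comm i 1 d, getElem_cons_succ] using
        ih hl₂.of_cons (by omega) (by omega)

theorem getElem_le_getElem_succ_of_sublist_of_sublist [Preorder α] {u l l' : List α}
    (h : u <+ l) (h' : u <+ l') (hl : l.SortedLE) (hl' : l'.SortedLE)
    (hlen : l.length = u.length + 1) (hlen' : l'.length = u.length + 1) {i : ℕ}
    (hi : i + 1 < l'.length) :
    l[i]'(by omega) ≤ l'[i + 1] :=
  calc l[i]'(by omega) ≤ u[i]'(by omega) := getElem_le_getElem_of_sublist h hl _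
    _ ≤ l'[i + 1] := getElem_le_getElem_add_of_sublist h' hl' hlen' _

theorem insertionSort_sublist_insertionSort [LinearOrder α] {l₁ l₂ : List α}
    (h : l₁ <+~ l₂) :
    l₁.insertionSort (· ≤ ·) <+ l₂.insertionSort (· ≤ ·) :=
  sublist_insertionSort' (pairwise_insertionSort _ _) ((perm_insertionSort _ _).subperm.trans h)

theorem eraseIdx_ofFn_eq_of_eq_of_ne {n : ℕ} {f g : Fin n → α} {i : Fin n}
    (h : ∀ j, j ≠ i → g j = f j) : (ofFn g).eraseIdx i = (ofFn f).eraseIdx i := by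
  refine ext_getElem (by simp only [length_eraseIdx, length_ofFn]) fun j _ _ => ?_
  simp only [getElem_eraseIdx, List.getElem_ofFn]
  split_ifs with hj <;> exact h _ (Fin.ne_of_val_ne (by simp only; omega))

theorem getElem_insertionSort_ofFn_le_getElem_succ [LinearOrder α] {n : ℕ}
    {f g : Fin (n + 1) → α} {i₀ : Fin (n + 1)} (h : ∀ j, j ≠ i₀ → g j = f j) {i : ℕ}
    (hi : i + 1 < n + 1) :
    ((ofFn f).insertionSort (· ≤ ·))[i]'(by rw [length_insertionSort, length_ofFn]; omega) ≤
      ((ofFn g).insertionSort (· ≤ ·))[i + 1]'(by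
        rw [length_insertionSort, length_ofFn]; omega) := by
  have hu : ((ofFn f).eraseIdx i₀).length = n := by
    rw [length_eraseIdx_of_lt (by simp only [length_ofFn, Fin.is_lt]), length_ofFn,
      Nat.add_sub_cancel]
  have hf : ((ofFn f).eraseIdx i₀).insertionSort (· ≤ ·) <+ (ofFn f).insertionSort (· ≤ ·) :=
    insertionSort_sublist_insertionSort (eraseIdx_sublist _ _).subperm
  have hg : ((ofFn f).eraseIdx i₀).insertionSort (· ≤ ·) <+ (ofFn g).insertionSort (· ≤ ·) :=
    eraseIdx_ofFn_eq_of_eq_of_ne h ▸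
      insertionSort_sublist_insertionSort (eraseIdx_sublist _ _).subperm
  refine getElem_le_getElem_succ_of_sublist_of_sublist hf hg
    sortedLE_insertionSort sortedLE_insertionSort ?_ ?_ _ <;>
  rw [length_insertionSort, length_insertionSort, length_ofFn, hu]

end List

/-- Changing a single input of an odd-size multiset moves the median at most
to the k-th / (k+2)-th order statistics of the original multiset. -/
theorem median_single_change_bounded {k : ℕ} (hk : 1 ≤ k)
    (a a' : Fin (2 * k + 1) → ℝ) (i0 : Fin (2 * k + 1))
    (hrest : ∀ j, j ≠ i0 → a' j = a j) :
    ((List.ofFn a).insertionSort (· ≤ ·)).getD (k - 1) 0 ≤ median a' ∧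
    median a' ≤ ((List.ofFn a).insertionSort (· ≤ ·)).getD (k + 1) 0 := by
  obtain ⟨m, rfl⟩ : ∃ m, k = m + 1 := ⟨k - 1, by omega⟩
  have hlen (b : Fin (2 * (m + 1) + 1) → ℝ) :
      ((List.ofFn b).insertionSort (· ≤ ·)).length = 2 * (m + 1) + 1 := by
    rw [List.length_insertionSort, List.length_ofFn]
  rw [median, Nat.add_sub_cancel, List.getD_eq_getElem _ _ (by rw [hlen]; omega),
    List.getD_eq_getElem _ _ (by rw [hlen]; omega), List.getD_eq_getElem _ _ (by rw [hlen]; omega)]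
  exact ⟨List.getElem_insertionSort_ofFn_le_getElem_succ hrest (by omega),
    List.getElem_insertionSort_ofFn_le_getElem_succ (fun j hj => (hrest j hj).symm) (by omega)⟩
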